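/- (Contraction of the proximal gradient method toward equilibrium) Suppose f_{x̄} is α-strongly convex and ∇f_{x̄} is L-Lipschitz continuous, with 0 < α ≤ L. Then for every x ∈ E and every step size 0 < η ≤ 1/L, the proximal gradient update x⁺ = prox_{ηr}(x − η∇f_x(x)) satisfies ‖x⁺ − x̄‖ ≤ (√(1 − ηα) + γηβ)·‖x − x̄‖. -/

import Mathlib

/-!
The equilibrium `xbar` is a fixed point of the proximal gradient map of `f_{xbar} + r`, while `xp`
is the prox of a gradient step that uses the gradient of `f_x` instead of that of `f_{xbar}`. The
prox is nonexpansive, so `‖xp - xbar‖` is at most the distance between the two gradient steps.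
The gradient step of `f_{xbar}` contracts by `√(1 - ηα)`: strong convexity makes the gradient
strongly monotone, and the Lipschitz gradient of a convex function is cocoercive
(Baillon–Haddad), which absorbs the quadratic term as soon as `η ≤ 1/L`. The remaining error
`η‖∇f_x(x) - ∇f_{xbar}(x)‖` is at most `ηβγ‖x - xbar‖` by Kantorovich–Rubinstein duality, testing
the two measures against `z ↦ ⟪w, ∇ℓ(x, z)⟫` with `w = ∇f_x(x) - ∇f_{xbar}(x)`.
-/

open MeasureTheory Set Filter Topology
open scoped RealInnerProductSpace NNReal

section Gradient

variable {E : Type*} [NormedAddCommGroup E] [InnerProductSpace ℝ E] [CompleteSpace E]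

theorem HasGradientAt.hasDerivAt_comp_add_smul {f : E → ℝ} {g x d : E} {t : ℝ}
    (hf : HasGradientAt f g (x + t • d)) :
    HasDerivAt (fun s : ℝ => f (x + s • d)) ⟪g, d⟫ t := by
  have hline : HasDerivAt (fun s : ℝ => x + s • d) d t :=
    ((hasDerivAt_id t).smul_const d).const_add x |>.congr_deriv (one_smul ℝ d)
  have h := (hasGradientAt_iff_hasFDerivAt.1 hf).comp_hasDerivAt t hline
  rwa [InnerProductSpace.toDual_apply_apply] at h

theorem HasGradientAt.neg {f : E → ℝ} {g x : E} (hf : HasGradientAt f g x) :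
    HasGradientAt (fun y => -f y) (-g) x := by
  rw [hasGradientAt_iff_hasFDerivAt, map_neg]
  exact (hasGradientAt_iff_hasFDerivAt.1 hf).neg

theorem hasGradientAt_const_mul_norm_sub_sq (c : ℝ) (u x : E) :
    HasGradientAt (fun y => c * ‖y - u‖ ^ 2) ((2 * c) • (x - u)) x := by
  rw [hasGradientAt_iff_hasFDerivAt]
  refine (((hasFDerivAt_id x).sub_const u).norm_sq.const_mul c).congr_fderiv ?_
  ext v
  simp
  ring

theorem StrongConvexOn.add_le_add_inner_of_forall_add_le {r φ : E → ℝ} {m : ℝ} {g p : E}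
    (hr : StrongConvexOn univ m r) (hφ : HasGradientAt φ g p)
    (hmin : ∀ y, r p + φ p ≤ r y + φ y) (y : E) :
    r p + m / 2 * ‖y - p‖ ^ 2 ≤ r y + ⟪g, y - p⟫ := by
  set d := y - p
  have hslope : Tendsto (slope (fun t : ℝ => φ (p + t • d)) 0) (𝓝[>] 0) (𝓝 ⟪g, d⟫) :=
    (hasDerivWithinAt_iff_tendsto_slope' (lt_irrefl 0)).1
      (HasGradientAt.hasDerivAt_comp_add_smul (by simpa using hφ)).hasDerivWithinAt
  have hlower : Tendsto (fun t : ℝ => r p - r y + (1 - t) * (m / 2 * ‖d‖ ^ 2)) (𝓝[>] 0)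
      (𝓝 (r p - r y + m / 2 * ‖d‖ ^ 2)) := by
    have hcont : Continuous fun t : ℝ => r p - r y + (1 - t) * (m / 2 * ‖d‖ ^ 2) := by
      fun_prop
    simpa using (hcont.tendsto 0).mono_left nhdsWithin_le_nhds
  have hbound : ∀ᶠ t in 𝓝[>] (0 : ℝ),
      r p - r y + (1 - t) * (m / 2 * ‖d‖ ^ 2) ≤ slope (fun t : ℝ => φ (p + t • d)) 0 t := by
    filter_upwards [Ioo_mem_nhdsGT one_pos] with t ⟨ht0, ht1⟩
    have hseg : (1 - t) • p + t • y = p + t • d := by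
      simp only [d, smul_sub, sub_smul, one_smul]; abel
    have hconv := hr.2 (mem_univ p) (mem_univ y) (sub_nonneg.2 ht1.le) ht0.le (by ring)
    rw [hseg, smul_eq_mul, smul_eq_mul, norm_sub_rev] at hconv
    have := hmin (p + t • d)
    rw [slope_def_field, zero_smul, add_zero, sub_zero, le_div_iff₀ ht0]
    nlinarith
  linarith [le_of_tendsto_of_tendsto hlower hslope hbound]

theorem ConvexOn.le_add_inner_of_forall_add_le {r φ : E → ℝ} {g p : E}
    (hr : ConvexOn ℝ univ r) (hφ : HasGradientAt φ g p)
    (hmin : ∀ y, r p + φ p ≤ r y + φ y) (y : E) :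
    r p ≤ r y + ⟪g, y - p⟫ := by
  simpa using (strongConvexOn_zero.2 hr).add_le_add_inner_of_forall_add_le hφ hmin y

theorem StrongConvexOn.add_inner_add_le {f : E → ℝ} {m : ℝ} {g x : E}
    (hf : StrongConvexOn univ m f) (hg : HasGradientAt f g x) (y : E) :
    f x + ⟪g, y - x⟫ + m / 2 * ‖y - x‖ ^ 2 ≤ f y := by
  -- `x` minimizes `f + (-f)`.
  have h := hf.add_le_add_inner_of_forall_add_le hg.neg (fun y => by simp) y
  rw [inner_neg_left] at h
  linarith

theorem ConvexOn.add_inner_le {f : E → ℝ} {g x : E}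
    (hf : ConvexOn ℝ univ f) (hg : HasGradientAt f g x) (y : E) :
    f x + ⟪g, y - x⟫ ≤ f y := by
  simpa using (strongConvexOn_zero.2 hf).add_inner_add_le hg y

theorem StrongConvexOn.mul_sq_le_inner_sub {f : E → ℝ} {m : ℝ} {g : E → E}
    (hf : StrongConvexOn univ m f) (hg : ∀ x, HasGradientAt f (g x) x) (u v : E) :
    m * ‖u - v‖ ^ 2 ≤ ⟪g u - g v, u - v⟫ := by
  have huv := hf.add_inner_add_le (hg u) v
  have hvu := hf.add_inner_add_le (hg v) u
  rw [norm_sub_rev] at huv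
  have : ⟪g u, v - u⟫ + ⟪g v, u - v⟫ = -⟪g u - g v, u - v⟫ := by
    rw [← neg_sub u v, inner_neg_right, inner_sub_left]; ring
  linarith

theorem le_add_inner_add_of_lipschitzWith_gradient {f : E → ℝ} {g : E → E} {K : ℝ≥0}
    (hf : ∀ x, HasGradientAt f (g x) x) (hg : LipschitzWith K g) (x y : E) :
    f y ≤ f x + ⟪g x, y - x⟫ + K / 2 * ‖y - x‖ ^ 2 := by
  set d := y - x
  set k : ℝ → ℝ := fun t => f (x + t • d) - t * ⟪g x, d⟫ - K / 2 * t ^ 2 * ‖d‖ ^ 2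
  have hk : ∀ t, HasDerivAt k (⟪g (x + t • d), d⟫ - ⟪g x, d⟫ - K * t * ‖d‖ ^ 2) t := by
    intro t
    have h := ((HasGradientAt.hasDerivAt_comp_add_smul (x := x) (d := d) (hf _)).sub
      ((hasDerivAt_id t).mul_const ⟪g x, d⟫)).sub
      (((hasDerivAt_pow 2 t).const_mul ((K : ℝ) / 2)).mul_const (‖d‖ ^ 2))
    exact h.congr_deriv (by push_cast; ring)
  have hk' : ∀ t ∈ interior (Ici (0 : ℝ)),
      ⟪g (x + t • d), d⟫ - ⟪g x, d⟫ - K * t * ‖d‖ ^ 2 ≤ 0 := by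
    intro t ht
    rw [interior_Ici, mem_Ioi] at ht
    have hlip : ‖g (x + t • d) - g x‖ ≤ K * (t * ‖d‖) := by
      simpa [dist_eq_norm, norm_smul, abs_of_pos ht] using hg.dist_le_mul (x + t • d) x
    have := real_inner_le_norm (g (x + t • d) - g x) d
    rw [inner_sub_left] at this
    nlinarith [norm_nonneg d]
  have hanti : AntitoneOn k (Ici 0) :=
    antitoneOn_of_hasDerivWithinAt_nonpos (convex_Ici 0)
      (fun t _ => (hk t).continuousAt.continuousWithinAt)
      (fun t _ => (hk t).hasDerivWithinAt) hk'
  have h01 := hanti self_mem_Ici (mem_Ici.2 zero_le_one) zero_le_one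
  norm_num [k, d] at h01
  linarith

theorem ConvexOn.add_inner_add_sq_div_le {f : E → ℝ} {g : E → E} {K : ℝ≥0}
    (hf : ConvexOn ℝ univ f) (hgrad : ∀ x, HasGradientAt f (g x) x) (hg : LipschitzWith K g)
    (a b : E) :
    f b + ⟪g b, a - b⟫ + ‖g a - g b‖ ^ 2 / (2 * K) ≤ f a := by
  set e := g a - g b
  -- the gradient step from `a` for `f - ⟪g b, ·⟫`, which is minimal at `b`
  set z := a - (K : ℝ)⁻¹ • e
  have hlow := hf.add_inner_le (hgrad b) z
  have hup := le_add_inner_add_of_lipschitzWith_gradient hgrad hg a z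
  have hza : z - a = -((K : ℝ)⁻¹ • e) := by simp [z]
  have hKK : (K : ℝ) * (K : ℝ)⁻¹ ^ 2 = (K : ℝ)⁻¹ := by
    rcases eq_or_ne (K : ℝ) 0 with hK | hK
    · simp [hK]
    · field_simp
  have hstep : ⟪g a - g b, z - a⟫ + K / 2 * ‖z - a‖ ^ 2 = -(‖e‖ ^ 2 / (2 * K)) := by
    rw [hza, inner_neg_right, real_inner_smul_right, real_inner_self_eq_norm_sq, norm_neg,
      norm_smul, mul_pow, Real.norm_eq_abs, sq_abs]
    linear_combination (‖e‖ ^ 2 / 2) * hKK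
  have hsplit : ⟪g b, z - b⟫ = ⟪g b, a - b⟫ + ⟪g b, z - a⟫ := by
    rw [← inner_add_right, sub_add_sub_cancel']
  rw [inner_sub_left] at hstep
  linarith

theorem ConvexOn.sq_norm_sub_div_le_inner {f : E → ℝ} {g : E → E} {K : ℝ≥0}
    (hf : ConvexOn ℝ univ f) (hgrad : ∀ x, HasGradientAt f (g x) x) (hg : LipschitzWith K g)
    (u v : E) :
    ‖g u - g v‖ ^ 2 / K ≤ ⟪g u - g v, u - v⟫ := by
  have huv := hf.add_inner_add_sq_div_le hgrad hg u v
  have hvu := hf.add_inner_add_sq_div_le hgrad hg v u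
  rw [norm_sub_rev] at hvu
  have : ⟪g v, u - v⟫ + ⟪g u, v - u⟫ = -⟪g u - g v, u - v⟫ := by
    rw [← neg_sub u v, inner_neg_right, inner_sub_left]; ring
  have : ‖g u - g v‖ ^ 2 / K = 2 * (‖g u - g v‖ ^ 2 / (2 * K)) := by ring
  linarith

theorem StrongConvexOn.norm_sub_smul_sub_le {f : E → ℝ} {g : E → E} {m η : ℝ} {K : ℝ≥0}
    (hf : StrongConvexOn univ m f) (hm : 0 ≤ m) (hgrad : ∀ x, HasGradientAt f (g x) x)
    (hg : LipschitzWith K g) (hη : 0 ≤ η) (hηK : η ≤ 1 / K) (x y : E) :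
    ‖(x - η • g x) - (y - η • g y)‖ ≤ √(1 - η * m) * ‖x - y‖ := by
  set d := x - y
  set e := g x - g y
  have hmono : m * ‖d‖ ^ 2 ≤ ⟪e, d⟫ := hf.mul_sq_le_inner_sub hgrad x y
  have hcoco : ‖e‖ ^ 2 / K ≤ ⟪e, d⟫ :=
    (strongConvexOn_zero.1 (hf.mono hm)).sq_norm_sub_div_le_inner hgrad hg x y
  have hηe : η * ‖e‖ ^ 2 ≤ ‖e‖ ^ 2 / K := by
    simpa [div_eq_inv_mul] using mul_le_mul_of_nonneg_right hηK (sq_nonneg ‖e‖)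
  have hsq : ‖d - η • e‖ ^ 2 ≤ (1 - η * m) * ‖d‖ ^ 2 := by
    rw [norm_sub_sq_real, real_inner_smul_right, norm_smul, mul_pow, Real.norm_eq_abs, sq_abs,
      real_inner_comm]
    nlinarith [mul_le_mul_of_nonneg_left (hηe.trans hcoco) hη,
      mul_le_mul_of_nonneg_left hmono hη]
  have hrw : (x - η • g x) - (y - η • g y) = d - η • e := by
    simp only [d, e, smul_sub]; abel
  rw [hrw, ← Real.sqrt_sq (norm_nonneg (d - η • e)), ← Real.sqrt_sq (norm_nonneg d),
    ← Real.sqrt_mul' _ (sq_nonneg _)]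
  exact Real.sqrt_le_sqrt hsq

end Gradient

section Prox

variable {E : Type*} [NormedAddCommGroup E] [InnerProductSpace ℝ E] [CompleteSpace E]

def IsProx (r : E → ℝ) (η : ℝ) (u p : E) : Prop :=
  ∀ y, r p + 1 / (2 * η) * ‖p - u‖ ^ 2 ≤ r y + 1 / (2 * η) * ‖y - u‖ ^ 2

theorem isProx_iff_forall_le_add_inner {r : E → ℝ} {η : ℝ} {u p : E} (hr : ConvexOn ℝ univ r)
    (hη : 0 < η) :
    IsProx r η u p ↔ ∀ y, r p ≤ r y + ⟪η⁻¹ • (p - u), y - p⟫ := by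
  constructor
  · intro hp y
    have hgrad := hasGradientAt_const_mul_norm_sub_sq (1 / (2 * η)) u p
    rw [show 2 * (1 / (2 * η)) = η⁻¹ by field_simp] at hgrad
    exact hr.le_add_inner_of_forall_add_le hgrad hp y
  · intro hp y
    have hexpand : ‖y - u‖ ^ 2 = ‖y - p‖ ^ 2 + 2 * ⟪y - p, p - u⟫ + ‖p - u‖ ^ 2 := by
      rw [← norm_add_sq_real, sub_add_sub_cancel]
    have := hp y
    rw [real_inner_smul_left, real_inner_comm] at this
    rw [hexpand]
    have : 0 ≤ 1 / (2 * η) * ‖y - p‖ ^ 2 := by positivity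
    field_simp at *
    nlinarith

theorem IsProx.sq_norm_sub_le_inner {r : E → ℝ} {η : ℝ} {u v p q : E} (hr : ConvexOn ℝ univ r)
    (hη : 0 < η) (hp : IsProx r η u p) (hq : IsProx r η v q) :
    ‖p - q‖ ^ 2 ≤ ⟪u - v, p - q⟫ := by
  have hpq := (isProx_iff_forall_le_add_inner hr hη).1 hp q
  have hqp := (isProx_iff_forall_le_add_inner hr hη).1 hq p
  have hsum : ⟪η⁻¹ • (p - u), q - p⟫ + ⟪η⁻¹ • (q - v), p - q⟫
      = η⁻¹ * (⟪u - v, p - q⟫ - ‖p - q‖ ^ 2) := by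
    rw [← real_inner_self_eq_norm_sq, ← inner_sub_left, ← real_inner_smul_left, ← neg_sub p q,
      inner_neg_right, ← sub_eq_neg_add, ← inner_sub_left]
    congr 1
    module
  have hnonneg : 0 ≤ η⁻¹ * (⟪u - v, p - q⟫ - ‖p - q‖ ^ 2) := by linarith
  exact sub_nonneg.1 ((mul_nonneg_iff_of_pos_left (inv_pos.2 hη)).1 hnonneg)

theorem IsProx.norm_sub_le {r : E → ℝ} {η : ℝ} {u v p q : E} (hr : ConvexOn ℝ univ r)
    (hη : 0 < η) (hp : IsProx r η u p) (hq : IsProx r η v q) :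
    ‖p - q‖ ≤ ‖u - v‖ := by
  have h := (hp.sq_norm_sub_le_inner hr hη hq).trans (real_inner_le_norm _ _)
  rw [sq] at h
  rcases (norm_nonneg (p - q)).eq_or_lt with h0 | hpos
  · rw [← h0]; exact norm_nonneg _
  · exact le_of_mul_le_mul_right h hpos

end Prox

section KantorovichRubinstein

variable {Z : Type*} [PseudoMetricSpace Z] [MeasurableSpace Z] {μ ν : Measure Z} {c : ℝ}

theorem abs_integral_sub_integral_le_of_lipschitzWith
    (hKR : ∀ g : Z → ℝ, LipschitzWith 1 g → |∫ z, g z ∂μ - ∫ z, g z ∂ν| ≤ c)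
    {g : Z → ℝ} {K : ℝ≥0} (hg : LipschitzWith K g) :
    |∫ z, g z ∂μ - ∫ z, g z ∂ν| ≤ K * c := by
  -- Dividing by `K' > K` rather than by `K` also covers `K = 0`.
  have hscaled : ∀ K' > (K : ℝ), |∫ z, g z ∂μ - ∫ z, g z ∂ν| ≤ K' * c := by
    intro K' hK'
    have hK'pos : 0 < K' := K.2.trans_lt hK'
    have hg' : LipschitzWith 1 fun z => g z / K' := by
      refine LipschitzWith.of_dist_le_mul fun z w => ?_
      rw [Real.dist_eq, ← sub_div, abs_div, abs_of_pos hK'pos, NNReal.coe_one, one_mul,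
        div_le_iff₀ hK'pos, ← Real.dist_eq]
      nlinarith [hg.dist_le_mul z w, dist_nonneg (x := z) (y := w)]
    have h := hKR _ hg'
    rwa [integral_div, integral_div, ← sub_div, abs_div, abs_of_pos hK'pos, div_le_iff₀ hK'pos,
      mul_comm] at h
  have hlim : Tendsto (fun K' : ℝ => K' * c) (𝓝[>] (K : ℝ)) (𝓝 (K * c)) :=
    ((continuous_mul_const c).tendsto _).mono_left nhdsWithin_le_nhds
  exact ge_of_tendsto hlim (eventually_nhdsWithin_of_forall hscaled)

theorem norm_integral_sub_integral_le_of_lipschitzWith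
    {E : Type*} [NormedAddCommGroup E] [InnerProductSpace ℝ E] [CompleteSpace E]
    (hKR : ∀ g : Z → ℝ, LipschitzWith 1 g → |∫ z, g z ∂μ - ∫ z, g z ∂ν| ≤ c)
    {G : Z → E} {K : ℝ≥0} (hG : LipschitzWith K G) (hμ : Integrable G μ) (hν : Integrable G ν) :
    ‖∫ z, G z ∂μ - ∫ z, G z ∂ν‖ ≤ K * c := by
  set w := ∫ z, G z ∂μ - ∫ z, G z ∂ν
  have hc : 0 ≤ c := by simpa using hKR (fun _ => 0) (LipschitzWith.const' 0)
  have hlip : LipschitzWith (‖w‖₊ * K) fun z => ⟪w, G z⟫ := by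
    have hnorm : ‖innerSL ℝ w‖₊ = ‖w‖₊ := NNReal.eq (innerSL_apply_norm ℝ w)
    have h := (innerSL ℝ w).lipschitz.comp hG
    rw [hnorm] at h
    exact h
  have h := abs_integral_sub_integral_le_of_lipschitzWith hKR hlip
  rw [integral_inner hμ, integral_inner hν, ← inner_sub_right, real_inner_self_eq_norm_sq,
    abs_of_nonneg (sq_nonneg _), NNReal.coe_mul, coe_nnnorm, sq, mul_assoc] at h
  rcases (norm_nonneg w).eq_or_lt with h0 | hpos
  · rw [← h0]; positivity
  · exact le_of_mul_le_mul_left h hpos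

end KantorovichRubinstein

theorem repeated_minimization_contraction_general
    {E : Type*} [NormedAddCommGroup E] [InnerProductSpace ℝ E] [FiniteDimensional ℝ E]
    {Z : Type*} [MetricSpace Z] [MeasurableSpace Z]
    (G : E → Z → E) (β γ : ℝ) (hβ : 0 ≤ β)
    (hlip : ∀ (x : E) (z z' : Z), ‖G x z - G x z'‖ ≤ β * dist z z')
    (D : E → Measure Z)
    (hintG : ∀ x y : E, Integrable (fun z => G y z) (D x))
    (f : E → E → ℝ) (Gf : E → E → E)
    (hGfdef : ∀ x y : E, Gf x y = ∫ z, G y z ∂(D x))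
    (hfgrad : ∀ x y : E, HasGradientAt (f x) (Gf x y) y)
    (hDlip : ∀ x y : E, ∀ g : Z → ℝ, LipschitzWith 1 g →
      |(∫ z, g z ∂(D x)) - ∫ z, g z ∂(D y)| ≤ γ * ‖x - y‖)
    (r : E → ℝ) (hr : ConvexOn ℝ univ r)
    (xbar : E) (hxbar : ∀ y : E, f xbar xbar + r xbar ≤ f xbar y + r y)
    (α : ℝ) (hα : 0 < α)
    (hsc : ConvexOn ℝ univ (fun y => f xbar y - α / 2 * ‖y‖ ^ 2))
    (L : ℝ) (hαL : α ≤ L)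
    (hLip : ∀ u v : E, ‖Gf xbar u - Gf xbar v‖ ≤ L * ‖u - v‖)
    (x : E) (η : ℝ) (hη0 : 0 < η) (hηL : η ≤ 1 / L)
    (xp : E) (hxp : ∀ y : E, r xp + 1 / (2 * η) * ‖xp - (x - η • Gf x x)‖ ^ 2
      ≤ r y + 1 / (2 * η) * ‖y - (x - η • Gf x x)‖ ^ 2) :
    ‖xp - xbar‖ ≤ (Real.sqrt (1 - η * α) + γ * η * β) * ‖x - xbar‖ := by
  have hL : 0 ≤ L := hα.le.trans hαL
  have hGfL : LipschitzWith ⟨L, hL⟩ (Gf xbar) :=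
    LipschitzWith.of_dist_le_mul fun u v => by rw [dist_eq_norm, dist_eq_norm]; exact hLip u v
  have hGL : LipschitzWith ⟨β, hβ⟩ (G x) :=
    LipschitzWith.of_dist_le_mul fun z z' => by rw [dist_eq_norm]; exact hlip x z z'
  have hfixed : IsProx r η (xbar - η • Gf xbar xbar) xbar :=
    (isProx_iff_forall_le_add_inner hr hη0).2 fun y => by
      simpa [hη0.ne'] using
        hr.le_add_inner_of_forall_add_le (hfgrad xbar xbar) (fun y => by linarith [hxbar y]) y
  have hprox : ‖xp - xbar‖ ≤ ‖(x - η • Gf x x) - (xbar - η • Gf xbar xbar)‖ :=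
    IsProx.norm_sub_le hr hη0 hxp hfixed
  have hstep := (strongConvexOn_iff_convex.2 hsc).norm_sub_smul_sub_le hα.le (hfgrad xbar) hGfL
    hη0.le hηL x xbar
  have hshift : ‖Gf x x - Gf xbar x‖ ≤ β * (γ * ‖x - xbar‖) := by
    rw [hGfdef, hGfdef]
    exact norm_integral_sub_integral_le_of_lipschitzWith (hDlip x xbar) hGL (hintG x x)
      (hintG xbar x)
  calc ‖xp - xbar‖ ≤ ‖(x - η • Gf x x) - (xbar - η • Gf xbar xbar)‖ := hprox
    _ = ‖((x - η • Gf xbar x) - (xbar - η • Gf xbar xbar)) - η • (Gf x x - Gf xbar x)‖ := by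
        congr 1; module
    _ ≤ ‖(x - η • Gf xbar x) - (xbar - η • Gf xbar xbar)‖ + ‖η • (Gf x x - Gf xbar x)‖ :=
        norm_sub_le _ _
    _ ≤ √(1 - η * α) * ‖x - xbar‖ + η * (β * (γ * ‖x - xbar‖)) := by
        rw [norm_smul, Real.norm_of_nonneg hη0.le]
        gcongr
    _ = (Real.sqrt (1 - η * α) + γ * η * β) * ‖x - xbar‖ := by ring

/-- **Contraction of repeated minimization toward equilibrium.** If `f_{xbar}` is `α`-strongly
convex, then any minimizer `xp` of `f_x + r` satisfies `‖xp − xbar‖ ≤ (γβ/α)‖x − xbar‖`. -/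
theorem repeated_minimization_contraction
    {E : Type*} [NormedAddCommGroup E] [InnerProductSpace ℝ E] [FiniteDimensional ℝ E]
    {Z : Type*} [MetricSpace Z] [MeasurableSpace Z] [BorelSpace Z]
    (ℓ : E → Z → ℝ) (G : E → Z → E) (β γ : ℝ) (hβ : 0 ≤ β) (hγ : 0 ≤ γ)
    (hgrad : ∀ (x : E) (z : Z), HasGradientAt (fun x' => ℓ x' z) (G x z) x)
    (hlip : ∀ (x : E) (z z' : Z), ‖G x z - G x z'‖ ≤ β * dist z z')
    (D : E → Measure Z) (hD : ∀ x : E, IsProbabilityMeasure (D x))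
    (hint : ∀ x y : E, Integrable (fun z => ℓ y z) (D x))
    (hintG : ∀ x y : E, Integrable (fun z => G y z) (D x))
    (f : E → E → ℝ) (Gf : E → E → E)
    (hfdef : ∀ x y : E, f x y = ∫ z, ℓ y z ∂(D x))
    (hGfdef : ∀ x y : E, Gf x y = ∫ z, G y z ∂(D x))
    (hfgrad : ∀ x y : E, HasGradientAt (f x) (Gf x y) y)
    (hDlip : ∀ x y : E, ∀ g : Z → ℝ, LipschitzWith 1 g →
      |(∫ z, g z ∂(D x)) - ∫ z, g z ∂(D y)| ≤ γ * ‖x - y‖)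
    (r : E → ℝ) (hr : ConvexOn ℝ univ r)
    (xbar : E) (hxbar : ∀ y : E, f xbar xbar + r xbar ≤ f xbar y + r y)
    (α : ℝ) (hα : 0 < α)
    (hsc : ConvexOn ℝ univ (fun y => f xbar y - α / 2 * ‖y‖ ^ 2))
    (L : ℝ) (hαL : α ≤ L)
    (hLip : ∀ u v : E, ‖Gf xbar u - Gf xbar v‖ ≤ L * ‖u - v‖)
    (x : E) (η : ℝ) (hη0 : 0 < η) (hηL : η ≤ 1 / L)
    (xp : E) (hxp : ∀ y : E, r xp + 1 / (2 * η) * ‖xp - (x - η • Gf x x)‖ ^ 2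
      ≤ r y + 1 / (2 * η) * ‖y - (x - η • Gf x x)‖ ^ 2) :
    ‖xp - xbar‖ ≤ (Real.sqrt (1 - η * α) + γ * η * β) * ‖x - xbar‖ :=
  repeated_minimization_contraction_general G β γ hβ hlip D hintG f Gf hGfdef hfgrad hDlip r hr xbar
    hxbar α hα hsc L hαL hLip x η hη0 hηL xp hxp
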